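/- arXiv:2009.08777 — 2 statements merged into one kernel-verified Lean document; each statement's English description precedes it below -/
import Mathlib

section
/- Let d = 2 and let Ω be an open subset of ℝ² (i.e., EuclideanSpace ℝ (Fin 2)) containing the origin. Define û(x) = -(1/(2π)) · log‖x‖ for x ≠ 0. Then the function x ↦ ‖∇û(x)‖² (equivalently x ↦ ‖fderiv ℝ û x‖²) is not Lebesgue-integrable on Ω; consequently û does not belong to H¹(Ω). -/
/-!
Away from the origin `∇ û(x) = -(2π)⁻¹ x / ‖x‖²`, so `‖∇ û(x)‖² = (2π)⁻² ‖x‖⁻²`. In polar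
coordinates `∫_{B(0,r)} ‖x‖ ^ s dx` is a multiple of `∫₀^r ρ ^ (s + d - 1) dρ`, which is finite
iff `s > -d`; the exponent `-2` is exactly the critical one in dimension `d = 2`.
-/

open MeasureTheory Real Metric Module Filter Topology

section LogNorm

variable {F : Type*} [NormedAddCommGroup F] [InnerProductSpace ℝ F]

theorem hasFDerivAt_log_norm {x : F} (hx : x ≠ 0) :
    HasFDerivAt (fun y : F => log ‖y‖) ((‖x‖ ^ 2)⁻¹ • innerSL ℝ x) x := by
  have hsq : (‖x‖ ^ 2) ≠ 0 := by positivity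
  have hlog : (fun y : F => log ‖y‖) = fun y => 1 / 2 * log (‖y‖ ^ 2) := by
    funext y
    rw [log_pow]
    push_cast
    ring
  rw [hlog]
  refine (((hasStrictFDerivAt_norm_sq x).hasFDerivAt.log hsq).const_mul (1 / 2 : ℝ)).congr_fderiv
    ?_
  rw [← Nat.cast_smul_eq_nsmul ℝ, smul_smul, smul_smul]
  congr 1
  ring

theorem norm_fderiv_const_mul_log_norm (c : ℝ) {x : F} (hx : x ≠ 0) :
    ‖fderiv ℝ (fun y : F => c * log ‖y‖) x‖ = |c| * ‖x‖⁻¹ := by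
  rw [((hasFDerivAt_log_norm hx).const_mul c).fderiv, norm_smul, norm_smul, innerSL_apply_norm,
    norm_inv, norm_pow, norm_norm, Real.norm_eq_abs]
  field_simp

end LogNorm

section NormRpow

variable {E : Type*} [NormedAddCommGroup E] [NormedSpace ℝ E] [FiniteDimensional ℝ E]
  [Nontrivial E] [MeasurableSpace E] [BorelSpace E] (μ : Measure E) [μ.IsAddHaarMeasure]

theorem integrableOn_ball_norm_rpow_iff {r s : ℝ} (hr : 0 < r) :
    IntegrableOn (fun x : E => ‖x‖ ^ s) (ball 0 r) μ ↔ -(finrank ℝ E : ℝ) < s := by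
  rw [integrableOn_fun_norm_addHaar μ (f := fun y => y ^ s),
    integrableOn_congr_fun (g := fun y => y ^ (s + finrank ℝ E - 1)) _ measurableSet_Ioo,
    intervalIntegral.integrableOn_Ioo_rpow_iff hr]
  · constructor <;> intro h <;> linarith
  · rintro y ⟨hy, -⟩
    have : 1 ≤ finrank ℝ E := finrank_pos
    simp only [smul_eq_mul]
    rw [← rpow_natCast, ← rpow_add hy]
    push_cast [this]
    ring_nf

theorem not_integrableOn_norm_rpow_neg_finrank_of_mem_nhds {s : Set E} (hs : s ∈ 𝓝 0) :
    ¬ IntegrableOn (fun x : E => ‖x‖ ^ (-(finrank ℝ E : ℝ))) s μ := by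
  intro h
  obtain ⟨r, hr, hrs⟩ := Metric.mem_nhds_iff.1 hs
  exact lt_irrefl _ ((integrableOn_ball_norm_rpow_iff μ hr).1 (h.mono_set hrs))

end NormRpow

/-- The 2D Green's function `û(x) = -(1/(2π)) log ‖x‖` of the Laplacian has a gradient whose
squared norm is not Lebesgue-integrable on any open set `Ω` containing the origin; consequently
`û ∉ H¹(Ω)`. -/
theorem green_function_2d_not_in_H1
    (Ω : Set (EuclideanSpace ℝ (Fin 2))) (hΩ : IsOpen Ω)
    (h0 : (0 : EuclideanSpace ℝ (Fin 2)) ∈ Ω) :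
    ¬ IntegrableOn
      (fun x : EuclideanSpace ℝ (Fin 2) =>
        ‖fderiv ℝ (fun y : EuclideanSpace ℝ (Fin 2) => -(1 / (2 * π)) * Real.log ‖y‖) x‖ ^ 2)
      Ω volume := by
  set c : ℝ := -(1 / (2 * π))
  have hc : c ≠ 0 := by simp [c, pi_ne_zero]
  have hgrad : ∀ x : EuclideanSpace ℝ (Fin 2), x ≠ 0 → ‖fderiv ℝ (fun y => c * log ‖y‖) x‖ ^ 2 =
      c ^ 2 * ‖x‖ ^ (-(finrank ℝ (EuclideanSpace ℝ (Fin 2)) : ℝ)) := by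
    intro x hx
    rw [norm_fderiv_const_mul_log_norm c hx, finrank_euclideanSpace_fin, mul_pow, sq_abs,
      rpow_neg (norm_nonneg x), inv_pow]
    norm_cast
  intro H
  refine not_integrableOn_norm_rpow_neg_finrank_of_mem_nhds volume (hΩ.mem_nhds h0) ?_
  exact (integrable_const_mul_iff (pow_ne_zero 2 hc).isUnit _).1
    (H.congr_fun_ae (ae_restrict_of_ae ((Measure.ae_ne volume 0).mono hgrad)))
end

section
/- Let μ > 0 and 0 < ν < 1/2 be real numbers, let F ∈ ℝ³ with F ≠ 0, and define û : ℝ³ \ {0} → ℝ³ (on EuclideanSpace ℝ (Fin 3)) componentwise by û_i(x) = Σ_{j=1}^3 F_j/(16πμ(1-ν)‖x‖) · ( (3-4ν)δ_ij + x_i x_j/‖x‖² ), where δ_ij is the Kronecker delta. Then for every open set Ω ⊆ ℝ³ containing the origin, the function x ↦ ‖Dû(x)‖² (the squared norm of the total derivative fderiv ℝ û x) is not Lebesgue-integrable on Ω; consequently û does not belong to H¹(Ω; ℝ³). -/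
/-!
Writing `P_x F = (⟪x, F⟫ / ‖x‖²) x` for the orthogonal projection of `F` onto the line through `x`,
the Kelvin solution is `û(x) = ((3 - 4ν) F + P_x F) / (16πμ(1-ν)‖x‖)`. Since `‖P_x F‖ ≤ ‖F‖`,
`‖û(x)‖ ≥ κ / ‖x‖` with `κ = (2 - 4ν)‖F‖ / (16πμ(1-ν)) > 0`. As `û` is positively homogeneous of
degree `-1`, Euler's identity `Dû(x) x = -û(x)` gives `‖Dû(x)‖ ≥ κ / ‖x‖²`, so `‖Dû‖²` dominates
`κ² ‖x‖⁻⁴`, which is not integrable near the origin of `ℝ³`: in polar coordinates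
`∫₀ r⁻⁴ · r² dr` diverges.
-/

open MeasureTheory Real

/-- The Kelvin fundamental solution of three-dimensional linear elasticity with point force `F`
at the origin: `û_i(x) = Σ_j F_j/(16πμ(1-ν)‖x‖) · ((3-4ν)δ_ij + x_i x_j/‖x‖²)`. -/
noncomputable def kelvinSolution (μ ν : ℝ) (F : EuclideanSpace ℝ (Fin 3)) :
    EuclideanSpace ℝ (Fin 3) → EuclideanSpace ℝ (Fin 3) := fun x =>
  (WithLp.toLp 2 (fun i => ∑ j : Fin 3, F j / (16 * π * μ * (1 - ν) * ‖x‖) *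
      ((3 - 4 * ν) * (if i = j then 1 else 0) + x i * x j / ‖x‖ ^ 2)) :
    EuclideanSpace ℝ (Fin 3))

open Set Metric in
theorem not_integrableOn_ball_of_mul_rpow_le_norm {E F : Type*} [NormedAddCommGroup E]
    [NormedSpace ℝ E] [FiniteDimensional ℝ E] [Nontrivial E] [MeasurableSpace E] [BorelSpace E]
    [NormedAddCommGroup F] (μ : Measure E) [μ.IsAddHaarMeasure] {f : E → F} {C α r : ℝ}
    (hC : 0 < C) (hr : 0 < r) (hα : Module.finrank ℝ E ≤ α)
    (hf : ∀ x ∈ ball (0 : E) r, x ≠ 0 → C * ‖x‖ ^ (-α) ≤ ‖f x‖) :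
    ¬ IntegrableOn f (ball 0 r) μ := by
  intro hint
  have hα0 : α ≠ 0 := by
    have : (0 : ℝ) < Module.finrank ℝ E := by exact_mod_cast Module.finrank_pos
    linarith
  have hpow : IntegrableOn (fun x : E ↦ C * ‖x‖ ^ (-α)) (ball 0 r) μ := by
    refine hint.norm.mono' ((measurable_norm.pow_const _).const_mul C).aestronglyMeasurable
      (ae_restrict_of_forall_mem measurableSet_ball fun x hx ↦ ?_)
    rcases eq_or_ne x 0 with rfl | hx0
    · simp [zero_rpow (neg_ne_zero.2 hα0)]
    · rw [Real.norm_of_nonneg (by positivity)]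
      exact hf x hx hx0
  have hradial := (integrableOn_fun_norm_addHaar μ (f := fun y : ℝ ↦ C * y ^ (-α))).1 hpow
  have hrpow : IntegrableOn (fun y : ℝ ↦ y ^ ((Module.finrank ℝ E : ℝ) - 1 - α)) (Ioo 0 r) := by
    refine IntegrableOn.congr_fun (hradial.const_mul C⁻¹) (fun y hy ↦ ?_) measurableSet_Ioo
    have hy0 : 0 < y := hy.1
    rw [smul_eq_mul, ← rpow_natCast, Nat.cast_pred Module.finrank_pos, rpow_sub hy0,
      rpow_sub hy0, rpow_sub hy0, rpow_neg hy0.le]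
    field_simp
  rw [intervalIntegral.integrableOn_Ioo_rpow_iff hr] at hrpow
  linarith

theorem DifferentiableAt.fderiv_apply_self_of_smul_eq_zpow_smul {E F : Type*}
    [NormedAddCommGroup E] [NormedSpace ℝ E] [NormedAddCommGroup F] [NormedSpace ℝ F]
    {f : E → F} {x : E} {k : ℤ} (hf : DifferentiableAt ℝ f x)
    (hhom : ∀ t : ℝ, 0 < t → f (t • x) = t ^ k • f x) :
    fderiv ℝ f x x = (k : ℝ) • f x := by
  have hray : HasDerivAt (fun t : ℝ ↦ f (t • x)) (fderiv ℝ f x x) 1 := by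
    have hline : HasDerivAt (fun t : ℝ ↦ t • x) x 1 := by
      simpa using (hasDerivAt_id (1 : ℝ)).smul_const x
    exact hf.hasFDerivAt.comp_hasDerivAt_of_eq 1 hline (one_smul ℝ x).symm
  have hscal : HasDerivAt (fun t : ℝ ↦ t ^ k • f x) ((k : ℝ) • f x) 1 := by
    simpa using (hasDerivAt_zpow k (1 : ℝ) (Or.inl one_ne_zero)).smul_const (f x)
  refine hray.unique (hscal.congr_of_eventuallyEq ?_)
  filter_upwards [eventually_gt_nhds one_pos] with t ht using hhom t ht

theorem sub_one_mul_norm_le_norm_smul_add_starProjection {E : Type*} [NormedAddCommGroup E]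
    [InnerProductSpace ℝ E] (K : Submodule ℝ E) [K.HasOrthogonalProjection] (a : ℝ) (v : E) :
    (a - 1) * ‖v‖ ≤ ‖a • v + K.starProjection v‖ := by
  have hproj := K.norm_starProjection_apply_le v
  have htri := norm_sub_le (a • v + K.starProjection v) (K.starProjection v)
  rw [add_sub_cancel_right, norm_smul, Real.norm_eq_abs] at htri
  nlinarith [le_abs_self a, norm_nonneg v]

theorem kelvinSolution_eq (μ ν : ℝ) (F x : EuclideanSpace ℝ (Fin 3)) :
    kelvinSolution μ ν F x = (16 * π * μ * (1 - ν) * ‖x‖)⁻¹ •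
      ((3 - 4 * ν) • F + (inner ℝ x F / ‖x‖ ^ 2) • x) := by
  ext i
  simp only [kelvinSolution, PiLp.toLp_apply, PiLp.smul_apply, PiLp.add_apply, smul_eq_mul,
    PiLp.inner_apply, RCLike.inner_apply, conj_trivial, Fin.sum_univ_three]
  -- an opaque constant keeps `ring` from expanding the product under `⁻¹`
  generalize 16 * π * μ * (1 - ν) = c
  fin_cases i <;> simp only [Fin.reduceFinMk, Fin.isValue, Fin.reduceEq, if_true, if_false] <;> ring

theorem kelvinSolution_smul (μ ν : ℝ) (F x : EuclideanSpace ℝ (Fin 3)) {t : ℝ} (ht : 0 < t) :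
    kelvinSolution μ ν F (t • x) = t⁻¹ • kelvinSolution μ ν F x := by
  rcases eq_or_ne x 0 with rfl | hx
  · simp [kelvinSolution_eq]
  have hx' : ‖x‖ ≠ 0 := norm_ne_zero_iff.2 hx
  simp only [kelvinSolution_eq, norm_smul, Real.norm_of_nonneg ht.le, real_inner_smul_left,
    smul_smul, smul_add]
  congr 2 <;> field_simp

theorem differentiableAt_kelvinSolution (μ ν : ℝ) (F : EuclideanSpace ℝ (Fin 3))
    {x : EuclideanSpace ℝ (Fin 3)} (hx : x ≠ 0) :
    DifferentiableAt ℝ (kelvinSolution μ ν F) x := by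
  have hn : DifferentiableAt ℝ (‖·‖) x := differentiableAt_id.norm ℝ hx
  have hi : DifferentiableAt ℝ (fun y ↦ inner ℝ y F) x :=
    differentiableAt_id.inner ℝ (differentiableAt_const F)
  rw [funext (kelvinSolution_eq μ ν F)]
  simp only [mul_inv]
  fun_prop (disch := simp [hx])

theorem div_le_norm_kelvinSolution {μ ν : ℝ} (hμ : 0 ≤ μ) (hν : ν ≤ 1)
    (F x : EuclideanSpace ℝ (Fin 3)) :
    (2 - 4 * ν) * ‖F‖ / (16 * π * μ * (1 - ν)) / ‖x‖ ≤ ‖kelvinSolution μ ν F x‖ := by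
  have hproj : (inner ℝ x F / ‖x‖ ^ 2) • x = (ℝ ∙ x).starProjection F := by
    simp [Submodule.starProjection_singleton]
  have hc : 0 ≤ 16 * π * μ * (1 - ν) * ‖x‖ := by
    have : 0 ≤ 1 - ν := by linarith
    positivity
  rw [kelvinSolution_eq, hproj, norm_smul, norm_inv, Real.norm_of_nonneg hc, div_div,
    div_eq_inv_mul]
  gcongr
  linarith [sub_one_mul_norm_le_norm_smul_add_starProjection (ℝ ∙ x) (3 - 4 * ν) F]

theorem div_sq_le_norm_fderiv_kelvinSolution {μ ν : ℝ} (hμ : 0 ≤ μ) (hν : ν ≤ 1)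
    (F : EuclideanSpace ℝ (Fin 3)) {x : EuclideanSpace ℝ (Fin 3)} (hx : x ≠ 0) :
    (2 - 4 * ν) * ‖F‖ / (16 * π * μ * (1 - ν)) / ‖x‖ ^ 2
      ≤ ‖fderiv ℝ (kelvinSolution μ ν F) x‖ := by
  have hEuler : fderiv ℝ (kelvinSolution μ ν F) x x = -kelvinSolution μ ν F x := by
    simpa using (differentiableAt_kelvinSolution μ ν F hx).fderiv_apply_self_of_smul_eq_zpow_smul
      (k := -1) fun t ht ↦ by simpa using kelvinSolution_smul μ ν F x ht
  have hop := (fderiv ℝ (kelvinSolution μ ν F) x).le_opNorm x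
  rw [hEuler, norm_neg] at hop
  calc (2 - 4 * ν) * ‖F‖ / (16 * π * μ * (1 - ν)) / ‖x‖ ^ 2
      = (2 - 4 * ν) * ‖F‖ / (16 * π * μ * (1 - ν)) / ‖x‖ / ‖x‖ := by
        rw [div_div _ ‖x‖, sq]
    _ ≤ ‖kelvinSolution μ ν F x‖ / ‖x‖ := by
        gcongr
        exact div_le_norm_kelvinSolution hμ hν F x
    _ ≤ ‖fderiv ℝ (kelvinSolution μ ν F) x‖ := div_le_of_le_mul₀ (norm_nonneg x) (norm_nonneg _) hop

theorem kelvin_solution_not_in_H1_general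
    (μ ν : ℝ) (hμ : 0 < μ) (hν : ν < 1 / 2)
    (F : EuclideanSpace ℝ (Fin 3)) (hF : F ≠ 0)
    (Ω : Set (EuclideanSpace ℝ (Fin 3))) (hΩ : IsOpen Ω)
    (h0 : (0 : EuclideanSpace ℝ (Fin 3)) ∈ Ω) :
    ¬ IntegrableOn
      (fun x : EuclideanSpace ℝ (Fin 3) => ‖fderiv ℝ (kelvinSolution μ ν F) x‖ ^ 2)
      Ω volume := by
  intro hint
  obtain ⟨r, hr, hball⟩ := Metric.isOpen_iff.1 hΩ 0 h0
  set κ := (2 - 4 * ν) * ‖F‖ / (16 * π * μ * (1 - ν))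
  have hκ : 0 < κ := by
    have : 0 < 1 - ν := by linarith
    have : 0 < ‖F‖ := norm_pos_iff.2 hF
    have : 0 < 2 - 4 * ν := by linarith
    positivity
  refine not_integrableOn_ball_of_mul_rpow_le_norm volume (pow_pos hκ 2) hr (α := 4)
    (by simp only [finrank_euclideanSpace_fin]; norm_num) (fun x _ hx ↦ ?_) (hint.mono_set hball)
  have hderiv := div_sq_le_norm_fderiv_kelvinSolution (ν := ν) hμ.le (by linarith) F hx
  calc κ ^ 2 * ‖x‖ ^ (-4 : ℝ) = (κ / ‖x‖ ^ 2) ^ 2 := by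
        rw [rpow_neg (norm_nonneg x), rpow_ofNat]
        ring
    _ ≤ ‖fderiv ℝ (kelvinSolution μ ν F) x‖ ^ 2 := by gcongr
    _ = ‖‖fderiv ℝ (kelvinSolution μ ν F) x‖ ^ 2‖ := by simp

/-- The Kelvin fundamental solution `û` of 3D linear elasticity with point force `F ≠ 0` has a
total derivative whose squared norm is not Lebesgue-integrable on any open set `Ω` containing
the origin; consequently `û ∉ H¹(Ω; ℝ³)`. -/
theorem kelvin_solution_not_in_H1
    (μ ν : ℝ) (hμ : 0 < μ) (hν0 : 0 < ν) (hν : ν < 1 / 2)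
    (F : EuclideanSpace ℝ (Fin 3)) (hF : F ≠ 0)
    (Ω : Set (EuclideanSpace ℝ (Fin 3))) (hΩ : IsOpen Ω)
    (h0 : (0 : EuclideanSpace ℝ (Fin 3)) ∈ Ω) :
    ¬ IntegrableOn
      (fun x : EuclideanSpace ℝ (Fin 3) => ‖fderiv ℝ (kelvinSolution μ ν F) x‖ ^ 2)
      Ω volume :=
  kelvin_solution_not_in_H1_general μ ν hμ hν F hF Ω hΩ h0
end
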